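/- arXiv:1709.09339 — 5 statements merged into one kernel-verified Lean document; each statement's English description precedes it below -/
import Mathlib

section
/- Let X be a finite strict globular n-category (with usual exchange) and A a unital associative algebra. The set A × X embeds into the convolution algebra Γ(X;A) via (a,x) ↦ a·δˣ, and with the restricted convolution operations, A × X is a strict globular n-category with non-commutative exchange where (a,x) ∘ₚ (b,y) = (a·b, x ∘ₚ y). If A fails to be commutative, then A × X does not satisfy the usual exchange property, but always satisfies the non-commutative exchange property. -/
/-! The bundle `A × X` over a finite strict globular n-category `X` with
coefficients in a unital algebra `A`: embedding into the convolution algebra,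
the induced strict globular n-category structure with non-commutative
exchange, and failure of the usual exchange property when `A` is
non-commutative. -/

def IsId {C : Type*} (comp : C → C → Option C) (e : C) : Prop :=
  (∀ f g, comp f e = some g → g = f) ∧ ∀ f g, comp e f = some g → g = f

/-- `(C, comp)` is a 1-category (a partial monoid with local identities). -/
structure IsCat {C : Type*} (comp : C → C → Option C) : Prop where
  assoc₁ : ∀ f g h gh x, comp g h = some gh → comp f gh = some x →
    ∃ fg, comp f g = some fg ∧ comp fg h = some x
  assoc₂ : ∀ f g h fg x, comp f g = some fg → comp fg h = some x →
    ∃ gh, comp g h = some gh ∧ comp f gh = some x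
  source : ∀ f, ∃ r, IsId comp r ∧ comp f r = some f
  target : ∀ f, ∃ l, IsId comp l ∧ comp l f = some f
  comp_exists : ∀ f g r, IsId comp r → comp f r = some f → comp r g = some g →
    ∃ x, comp f g = some x

/-- Non-commutative (quantum) exchange between a composition `cUse` and a
composition `cFun`: for every `cFun`-identity `ι`, the partially defined left
and right `cUse`-multiplications by `ι` are functorial on `(C, cFun)`. -/
def NCExch {C : Type*} (cUse cFun : C → C → Option C) : Prop :=
  ∀ ι, IsId cFun ι →
    (∀ a b c a' b', cFun a b = some c → cUse ι a = some a' → cUse ι b = some b' →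
       ∃ c', cUse ι c = some c' ∧ cFun a' b' = some c') ∧
    (∀ e e', IsId cFun e → cUse ι e = some e' → IsId cFun e') ∧
    (∀ a b c a' b', cFun a b = some c → cUse a ι = some a' → cUse b ι = some b' →
       ∃ c', cUse c ι = some c' ∧ cFun a' b' = some c') ∧
    (∀ e e', IsId cFun e → cUse e ι = some e' → IsId cFun e')

/-- A strict globular `n`-category with non-commutative exchange. -/
structure NCat {C : Type*} {n : ℕ} (comp : Fin n → C → C → Option C) : Prop where
  cat : ∀ p, IsCat (comp p)
  /-- every `∘q`-identity is a `∘p`-identity for `q < p` -/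
  id_mono : ∀ p q : Fin n, q < p → ∀ e, IsId (comp q) e → IsId (comp p) e
  /-- `∘q`-compositions of `∘p`-identities are `∘p`-identities for `q < p` -/
  id_closed : ∀ p q : Fin n, q < p → ∀ e f g, IsId (comp p) e → IsId (comp p) f →
    comp q e f = some g → IsId (comp p) g
  /-- non-commutative exchange: left/right `∘q`-multiplication by `∘p`-identities
  is `∘p`-functorial, for `q < p` -/
  exchange : ∀ p q : Fin n, q < p → NCExch (comp q) (comp p)


/-- The usual exchange property for a family of partial compositions. -/
def UsualExch {C : Type*} {n : ℕ} (comp : Fin n → C → C → Option C) : Prop :=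
  ∀ p q : Fin n, q < p → ∀ x y w z a b r,
    comp p x y = some a → comp p w z = some b → comp q a b = some r →
    ∃ u v, comp q x w = some u ∧ comp q y z = some v ∧ comp p u v = some r

/-- The `p`-th convolution product on `Γ(X;A) = A^X`. -/
def convMul {n : ℕ} {X : Type*} [Fintype X] [DecidableEq X] {A : Type*} [Ring A]
    (comp : Fin n → X → X → Option X) (p : Fin n) (σ ρ : X → A) : X → A := fun z =>
  ∑ w : X × X, if comp p w.1 w.2 = some z then σ w.1 * ρ w.2 else 0

/-- The compositions on the bundle `A × X`: `(a,x) ∘ₚ (b,y) = (a·b, x ∘ₚ y)`. -/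
def pcomp {n : ℕ} {X : Type*} {A : Type*} [Mul A]
    (comp : Fin n → X → X → Option X) (p : Fin n) (u v : A × X) : Option (A × X) :=
  (comp p u.2 v.2).map fun z => (u.1 * v.1, z)

/-- The embedding `A × X → Γ(X;A)`, `(a,x) ↦ a·δˣ`. -/
def emb {X : Type*} [DecidableEq X] {A : Type*} [Ring A] (u : A × X) : X → A :=
  fun y => if y = u.2 then u.1 else 0


theorem isId_comp_self {C : Type*} {comp : C → C → Option C} (hc : IsCat comp)
    {e : C} (he : IsId comp e) : comp e e = some e := by
  obtain ⟨r, _, her⟩ := hc.source e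
  have h1 : e = r := he.2 r e her
  rw [← h1] at her
  exact her

theorem pcomp_eq_some {n : ℕ} {X A : Type*} [Mul A] {comp : Fin n → X → X → Option X}
    {p : Fin n} {u v w : A × X} :
    pcomp comp p u v = some w ↔ ∃ z, comp p u.2 v.2 = some z ∧ (u.1 * v.1, z) = w := by
  simp [pcomp, Option.map_eq_some_iff]

theorem pcomp_isId {n : ℕ} {X A : Type*} [Ring A] {comp : Fin n → X → X → Option X}
    {p : Fin n} (hc : IsCat (comp p)) {u : A × X} :
    IsId (pcomp comp p) u ↔ u.1 = 1 ∧ IsId (comp p) u.2 := by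
  constructor
  · intro hu
    have hid : IsId (comp p) u.2 := by
      constructor
      · intro x z hxz
        have := hu.1 ((1 : A), x) (1 * u.1, z)
          (by simp [pcomp, hxz])
        exact (Prod.ext_iff.mp this).2
      · intro x z hxz
        have := hu.2 ((1 : A), x) (u.1 * 1, z)
          (by simp [pcomp, hxz])
        exact (Prod.ext_iff.mp this).2
    refine ⟨?_, hid⟩
    have hee := isId_comp_self hc hid
    have := hu.1 ((1 : A), u.2) (1 * u.1, u.2) (by simp [pcomp, hee])
    have h1 := (Prod.ext_iff.mp this).1
    rwa [one_mul] at h1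
  · rintro ⟨h1, hid⟩
    constructor
    · intro f g hfg
      rcases pcomp_eq_some.mp hfg with ⟨z, hz, hg⟩
      have hzf : z = f.2 := hid.1 _ _ hz
      rw [← hg, h1, mul_one, hzf]
    · intro f g hfg
      rcases pcomp_eq_some.mp hfg with ⟨z, hz, hg⟩
      have hzf : z = f.2 := hid.2 _ _ hz
      rw [← hg, h1, one_mul, hzf]

/-- **The Cartesian bundle `A × X` as a strict globular n-category with
non-commutative exchange.**  Let `X` be a finite strict globular n-category
(with the usual exchange property) and `A` a unital associative algebra.  Then:
`A × X` embeds multiplicatively into the convolution algebra `Γ(X;A)` via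
`(a,x) ↦ a·δˣ`; with the restricted convolution operations
`(a,x) ∘ₚ (b,y) = (a·b, x ∘ₚ y)` it is a strict globular n-category with
non-commutative exchange; and if `A` fails to be commutative then `A × X` does
not satisfy the usual exchange property. -/
theorem bundle_ncat_noncommutative_exchange {n : ℕ} {X : Type*} [Fintype X] [DecidableEq X]
    {A : Type*} [Ring A] (comp : Fin n → X → X → Option X)
    (h : NCat comp) (hex : UsualExch comp) (hn : 2 ≤ n) (hne : Nonempty X) :
    (∀ (p : Fin n) (u v w : A × X), pcomp comp p u v = some w →
      convMul comp p (emb u) (emb v) = emb w) ∧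
    (∀ (p : Fin n) (a b : A) (x y z : X), comp p x y = some z →
      pcomp comp p (a, x) (b, y) = some (a * b, z)) ∧
    NCat (fun p => pcomp (A := A) comp p) ∧
    ((∃ a b : A, a * b ≠ b * a) → ¬ UsualExch (fun p => pcomp (A := A) comp p)) := by
  refine ⟨?_, ?_, ?_, ?_⟩
  · -- embedding into convolution algebra
    intro p u v w hw
    rcases pcomp_eq_some.mp hw with ⟨z, hz, hwz⟩
    subst hwz
    funext y
    unfold convMul emb
    rw [Finset.sum_eq_single (u.2, v.2)]
    · simp only [if_pos rfl, hz]
      by_cases hyz : y = z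
      · subst hyz; simp
      · simp [hyz, Ne.symm hyz, fun hh : some z = some y => hyz (Option.some.inj hh).symm]
    · rintro ⟨b1, b2⟩ _ hb
      by_cases h1 : b1 = u.2
      · have h2 : b2 ≠ v.2 := by rintro rfl; exact hb (by rw [h1])
        simp [h2]
      · simp [h1]
    · intro habs; exact absurd (Finset.mem_univ _) habs
  · -- pcomp formula
    intro p a b x y z hz
    simp [pcomp, hz]
  · -- NCat structure on A × X
    refine ⟨?_, ?_, ?_, ?_⟩
    · intro p
      constructor
      · intro f g k gk x hgk hx
        rcases pcomp_eq_some.mp hgk with ⟨zgk, hzgk, hgk2⟩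
        rcases pcomp_eq_some.mp hx with ⟨zx, hzx, hx2⟩
        rw [← hgk2] at hzx
        obtain ⟨fg2, hfg2, hfg2'⟩ := (h.cat p).assoc₁ f.2 g.2 k.2 zgk zx hzgk hzx
        refine ⟨(f.1 * g.1, fg2), pcomp_eq_some.mpr ⟨fg2, hfg2, rfl⟩,
          pcomp_eq_some.mpr ⟨zx, hfg2', ?_⟩⟩
        rw [← hx2, ← hgk2]
        simp [mul_assoc]
      · intro f g k fg x hfg hx
        rcases pcomp_eq_some.mp hfg with ⟨zfg, hzfg, hfg2⟩
        rcases pcomp_eq_some.mp hx with ⟨zx, hzx, hx2⟩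
        rw [← hfg2] at hzx
        obtain ⟨gk2, hgk2, hgk2'⟩ := (h.cat p).assoc₂ f.2 g.2 k.2 zfg zx hzfg hzx
        refine ⟨(g.1 * k.1, gk2), pcomp_eq_some.mpr ⟨gk2, hgk2, rfl⟩,
          pcomp_eq_some.mpr ⟨zx, hgk2', ?_⟩⟩
        rw [← hx2, ← hfg2]
        simp [mul_assoc]
      · intro f
        obtain ⟨r, hr, hfr⟩ := (h.cat p).source f.2
        exact ⟨((1 : A), r), (pcomp_isId (h.cat p)).mpr ⟨rfl, hr⟩,
          pcomp_eq_some.mpr ⟨f.2, hfr, by simp⟩⟩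
      · intro f
        obtain ⟨l, hl, hlf⟩ := (h.cat p).target f.2
        exact ⟨((1 : A), l), (pcomp_isId (h.cat p)).mpr ⟨rfl, hl⟩,
          pcomp_eq_some.mpr ⟨f.2, hlf, by simp⟩⟩
      · intro f g r hr hfr hrg
        obtain ⟨hr1, hr2⟩ := (pcomp_isId (h.cat p)).mp hr
        rcases pcomp_eq_some.mp hfr with ⟨z1, hz1, he1⟩
        rcases pcomp_eq_some.mp hrg with ⟨z2, hz2, he2⟩
        have hz1' : z1 = f.2 := hr2.1 _ _ hz1
        have hz2' : z2 = g.2 := hr2.2 _ _ hz2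
        rw [hz1'] at hz1
        rw [hz2'] at hz2
        obtain ⟨x2, hx2⟩ := (h.cat p).comp_exists f.2 g.2 r.2 hr2 hz1 hz2
        exact ⟨(f.1 * g.1, x2), pcomp_eq_some.mpr ⟨x2, hx2, rfl⟩⟩
    · intro p q hqp e he
      obtain ⟨h1, h2⟩ := (pcomp_isId (h.cat q)).mp he
      exact (pcomp_isId (h.cat p)).mpr ⟨h1, h.id_mono p q hqp e.2 h2⟩
    · intro p q hqp e f g he hf hg
      obtain ⟨he1, he2⟩ := (pcomp_isId (h.cat p)).mp he
      obtain ⟨hf1, hf2⟩ := (pcomp_isId (h.cat p)).mp hf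
      rcases pcomp_eq_some.mp hg with ⟨z, hz, hgz⟩
      refine (pcomp_isId (h.cat p)).mpr ⟨?_, ?_⟩
      · rw [← hgz]; simp [he1, hf1]
      · rw [← hgz]
        exact h.id_closed p q hqp e.2 f.2 z he2 hf2 hz
    · intro p q hqp ι hι
      obtain ⟨hι1, hι2⟩ := (pcomp_isId (h.cat p)).mp hι
      obtain ⟨X1, X2, X3, X4⟩ := h.exchange p q hqp ι.2 hι2
      refine ⟨?_, ?_, ?_, ?_⟩
      · intro a b c a' b' hab ha hb
        rcases pcomp_eq_some.mp hab with ⟨zc, hzc, hc⟩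
        rcases pcomp_eq_some.mp ha with ⟨za, hza, ha'⟩
        rcases pcomp_eq_some.mp hb with ⟨zb, hzb, hb'⟩
        subst hc
        obtain ⟨zc', hzc', hzc''⟩ := X1 a.2 b.2 zc za zb hzc hza hzb
        refine ⟨(ι.1 * (a.1 * b.1), zc'), pcomp_eq_some.mpr ⟨zc', hzc', rfl⟩,
          pcomp_eq_some.mpr ⟨zc', ?_, ?_⟩⟩
        · rw [← ha', ← hb']; exact hzc''
        · rw [← ha', ← hb']; simp [hι1]
      · intro e e' he he'
        obtain ⟨he1, he2⟩ := (pcomp_isId (h.cat p)).mp he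
        rcases pcomp_eq_some.mp he' with ⟨z, hz, hez⟩
        refine (pcomp_isId (h.cat p)).mpr ⟨?_, ?_⟩
        · rw [← hez]; simp [hι1, he1]
        · rw [← hez]; exact X2 e.2 z he2 hz
      · intro a b c a' b' hab ha hb
        rcases pcomp_eq_some.mp hab with ⟨zc, hzc, hc⟩
        rcases pcomp_eq_some.mp ha with ⟨za, hza, ha'⟩
        rcases pcomp_eq_some.mp hb with ⟨zb, hzb, hb'⟩
        subst hc
        obtain ⟨zc', hzc', hzc''⟩ := X3 a.2 b.2 zc za zb hzc hza hzb
        refine ⟨((a.1 * b.1) * ι.1, zc'), pcomp_eq_some.mpr ⟨zc', hzc', rfl⟩,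
          pcomp_eq_some.mpr ⟨zc', ?_, ?_⟩⟩
        · rw [← ha', ← hb']; exact hzc''
        · rw [← ha', ← hb']; simp [hι1]
      · intro e e' he he'
        obtain ⟨he1, he2⟩ := (pcomp_isId (h.cat p)).mp he
        rcases pcomp_eq_some.mp he' with ⟨z, hz, hez⟩
        refine (pcomp_isId (h.cat p)).mpr ⟨?_, ?_⟩
        · rw [← hez]; simp [hι1, he1]
        · rw [← hez]; exact X4 e.2 z he2 hz
  · -- failure of usual exchange for noncommutative A
    rintro ⟨a, b, hab⟩ hUE
    have h2n : 1 < n := lt_of_lt_of_le one_lt_two hn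
    set p : Fin n := ⟨1, h2n⟩
    set q : Fin n := ⟨0, by omega⟩
    have hqp : q < p := by simp [p, q, Fin.lt_def]
    obtain ⟨x0⟩ := hne
    obtain ⟨r, hr, -⟩ := (h.cat q).source x0
    have hrq : comp q r r = some r := isId_comp_self (h.cat q) hr
    have hrp : comp p r r = some r :=
      isId_comp_self (h.cat p) (h.id_mono p q hqp r hr)
    obtain ⟨u, v, hu, hv, huv⟩ := hUE p q hqp ((1 : A), r) (a, r) (b, r) ((1 : A), r)
      (1 * a, r) (b * 1, r) ((1 * a) * (b * 1), r)
      (pcomp_eq_some.mpr ⟨r, hrp, rfl⟩)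
      (pcomp_eq_some.mpr ⟨r, hrp, rfl⟩)
      (pcomp_eq_some.mpr ⟨r, hrq, rfl⟩)
    have hu' : u = (1 * b, r) := by
      have := pcomp_eq_some (comp := comp) (p := q) (u := ((1 : A), r)) (v := (b, r))
        (w := u) |>.mp hu
      rcases this with ⟨z, hz, hw⟩
      rw [hrq] at hz
      rw [← hw, Option.some.inj hz]
    have hv' : v = (a * 1, r) := by
      rcases pcomp_eq_some.mp hv with ⟨z, hz, hw⟩
      rw [hrq] at hz
      rw [← hw, Option.some.inj hz]
    subst hu' hv'
    rcases pcomp_eq_some.mp huv with ⟨z, hz, hw⟩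
    have : (1 * b) * (a * 1) = (1 * a) * (b * 1) := (Prod.ext_iff.mp hw).1
    simp only [one_mul, mul_one] at this
    exact hab this.symm
end

section
/- In a strict 2-category with involution over 1-arrows and a conjugation map, the two foldings interchange under the involution: (Φ_•)* = _•(Φ*) and (_•Φ)* = (Φ*)_• for every 2-cell Φ. Consequently the pseudo-involutions Φ^† := (Φ*)_• and Φ^‡ := _•(Φ*) satisfy (Φ^†)* = (Φ*)^‡ and (Φ^‡)* = (Φ*)^†. -/
/-- A strict 2-category (with 2-cells `Two`, 1-cells `One`, objects `Obj`)
equipped with a Hermitian involution `star` over 1-arrows (covariant for the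
tensor/horizontal composition `⊗`, contravariant for the vertical composition
`∘`) and a chosen conjugation map `x ↦ (R x, Rbar x)` satisfying the conjugate
equations.  `tens1 f g` denotes the (strictly associative and unital)
horizontal composite `f ⊗ g` of 1-cells, `tens` the horizontal composition of
2-cells, `vcomp a b` the vertical composite `a ∘ b` (`a` after `b`). -/
structure Conj2Cat where
  Obj : Type
  One : Type
  Two : Type
  s : One → Obj
  t : One → Obj
  src : Two → One
  tgt : Two → One
  id1 : Obj → One
  id2 : One → Two
  tens1 : One → One → One
  tens : Two → Two → Two
  vcomp : Two → Two → Two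
  star : Two → Two
  bar : One → One
  R : One → Two
  Rbar : One → Two
  -- 1-cell structure
  s_id1 : ∀ A, s (id1 A) = A
  t_id1 : ∀ A, t (id1 A) = A
  tens1_assoc : ∀ f g h, tens1 (tens1 f g) h = tens1 f (tens1 g h)
  tens1_id_left : ∀ f, tens1 (id1 (s f)) f = f
  tens1_id_right : ∀ f, tens1 f (id1 (t f)) = f
  s_tens1 : ∀ f g, t f = s g → s (tens1 f g) = s f
  t_tens1 : ∀ f g, t f = s g → t (tens1 f g) = t g
  -- globular structure of 2-cells
  src_id2 : ∀ f, src (id2 f) = f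
  tgt_id2 : ∀ f, tgt (id2 f) = f
  src_tens : ∀ a b, src (tens a b) = tens1 (src a) (src b)
  tgt_tens : ∀ a b, tgt (tens a b) = tens1 (tgt a) (tgt b)
  src_vcomp : ∀ a b, src a = tgt b → src (vcomp a b) = src b
  tgt_vcomp : ∀ a b, src a = tgt b → tgt (vcomp a b) = tgt a
  -- strict 2-category axioms
  vcomp_assoc : ∀ a b c, vcomp (vcomp a b) c = vcomp a (vcomp b c)
  vcomp_id_left : ∀ a, vcomp (id2 (tgt a)) a = a
  vcomp_id_right : ∀ a, vcomp a (id2 (src a)) = a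
  tens_assoc : ∀ a b c, tens (tens a b) c = tens a (tens b c)
  tens_id2 : ∀ f g, tens (id2 f) (id2 g) = id2 (tens1 f g)
  tens_id_left : ∀ a, tens (id2 (id1 (s (src a)))) a = a
  tens_id_right : ∀ a, tens a (id2 (id1 (t (src a)))) = a
  exchange : ∀ a b c d, src a = tgt b → src c = tgt d → t (src b) = s (src d) →
    vcomp (tens a c) (tens b d) = tens (vcomp a b) (vcomp c d)
  -- Hermitian involution over 1-arrows
  star_star : ∀ a, star (star a) = a
  star_vcomp : ∀ a b, star (vcomp a b) = vcomp (star b) (star a)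
  star_tens : ∀ a b, star (tens a b) = tens (star a) (star b)
  src_star : ∀ a, src (star a) = tgt a
  tgt_star : ∀ a, tgt (star a) = src a
  star_id2 : ∀ f, star (id2 f) = id2 f
  -- conjugation data
  s_bar : ∀ f, s (bar f) = t f
  t_bar : ∀ f, t (bar f) = s f
  src_R : ∀ f, src (R f) = id1 (t f)
  tgt_R : ∀ f, tgt (R f) = tens1 (bar f) f
  src_Rbar : ∀ f, src (Rbar f) = id1 (s f)
  tgt_Rbar : ∀ f, tgt (Rbar f) = tens1 f (bar f)
  -- the conjugate equations
  conjEq₁ : ∀ f, vcomp (tens (star (Rbar f)) (id2 f)) (tens (id2 f) (R f)) = id2 f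
  conjEq₂ : ∀ f, vcomp (tens (star (R f)) (id2 (bar f))) (tens (id2 (bar f)) (Rbar f)) = id2 (bar f)

namespace Conj2Cat

variable (K : Conj2Cat)

/-- The first folding map `Φ ↦ Φ_•`:
`Φ_• := (ι(x̄) ⊗ R̄*_y) ∘ (ι(x̄) ⊗ Φ ⊗ ι(ȳ)) ∘ (R_x ⊗ ι(ȳ))` for `Φ : x ⇒ y`. -/
def fold1 (Φ : K.Two) : K.Two :=
  K.vcomp (K.tens (K.id2 (K.bar (K.src Φ))) (K.star (K.Rbar (K.tgt Φ))))
    (K.vcomp (K.tens (K.tens (K.id2 (K.bar (K.src Φ))) Φ) (K.id2 (K.bar (K.tgt Φ))))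
      (K.tens (K.R (K.src Φ)) (K.id2 (K.bar (K.tgt Φ)))))

/-- The second folding map `Φ ↦ _•Φ`:
`_•Φ := (R*_y ⊗ ι(x̄)) ∘ (ι(ȳ) ⊗ Φ ⊗ ι(x̄)) ∘ (ι(ȳ) ⊗ R̄_x)` for `Φ : x ⇒ y`. -/
def fold2 (Φ : K.Two) : K.Two :=
  K.vcomp (K.tens (K.star (K.R (K.tgt Φ))) (K.id2 (K.bar (K.src Φ))))
    (K.vcomp (K.tens (K.tens (K.id2 (K.bar (K.tgt Φ))) Φ) (K.id2 (K.bar (K.src Φ))))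
      (K.tens (K.id2 (K.bar (K.tgt Φ))) (K.Rbar (K.src Φ))))

/-- The pseudo-involution `Φ^† := (Φ*)_•`. -/
def dag (Φ : K.Two) : K.Two := K.fold1 (K.star Φ)

/-- The pseudo-involution `Φ^‡ := _•(Φ*)`. -/
def ddag (Φ : K.Two) : K.Two := K.fold2 (K.star Φ)

end Conj2Cat

/-- **The foldings interchange under the involution.**  In a strict 2-category
with involution over 1-arrows and a conjugation map, `(Φ_•)* = _•(Φ*)` and
`(_•Φ)* = (Φ*)_•` for every 2-cell `Φ`.  Consequently the pseudo-involutions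
`Φ^† := (Φ*)_•` and `Φ^‡ := _•(Φ*)` satisfy `(Φ^†)* = (Φ*)^‡` and
`(Φ^‡)* = (Φ*)^†`. -/
theorem fold_star_interchange (K : Conj2Cat) (Φ : K.Two) :
    K.star (K.fold1 Φ) = K.fold2 (K.star Φ) ∧
    K.star (K.fold2 Φ) = K.fold1 (K.star Φ) ∧
    K.star (K.dag Φ) = K.ddag (K.star Φ) ∧
    K.star (K.ddag Φ) = K.dag (K.star Φ) := by
  refine ⟨?_, ?_, ?_, ?_⟩ <;>
  simp [Conj2Cat.fold1, Conj2Cat.fold2, Conj2Cat.dag, Conj2Cat.ddag,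
    K.star_vcomp, K.star_tens, K.star_id2, K.star_star, K.src_star, K.tgt_star,
    K.vcomp_assoc]
end

section
/- The family of bounded natural transformations between *-functors of small C*-categories forms a Longo-Roberts 2-C*-category: with pointwise vertical composition, Godement horizontal composition, pointwise *₁ involution, pointwise linear structure, and supremum norm, each block of natural transformations between a fixed pair of *-functors is a Banach space, the norm is submultiplicative for both compositions, the C*-property ‖Φ^{*₁} ∘₁ Φ‖ = ‖Φ‖² holds, and Φ^{*₁} ∘₁ Φ is positive. -/
/-- A (small) C*-category: an involutive algebroid over ℂ whose hom-blocks are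
Banach spaces, with bilinear composition, conjugate-linear contravariant
involution acting trivially on objects, submultiplicative norm, C*-property
and positivity. -/
structure CStarCat where
  Obj : Type
  Hom : Obj → Obj → Type
  comp : ∀ {A B C : Obj}, Hom B C → Hom A B → Hom A C
  id : ∀ A : Obj, Hom A A
  star : ∀ {A B : Obj}, Hom A B → Hom B A
  add : ∀ {A B : Obj}, Hom A B → Hom A B → Hom A B
  neg : ∀ {A B : Obj}, Hom A B → Hom A B
  zero : ∀ A B : Obj, Hom A B
  smul : ∀ {A B : Obj}, ℂ → Hom A B → Hom A B
  norm : ∀ {A B : Obj}, Hom A B → ℝ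
  -- category axioms
  comp_assoc : ∀ {A B C D : Obj} (h : Hom C D) (g : Hom B C) (f : Hom A B),
    comp (comp h g) f = comp h (comp g f)
  id_comp : ∀ {A B : Obj} (f : Hom A B), comp (id B) f = f
  comp_id : ∀ {A B : Obj} (f : Hom A B), comp f (id A) = f
  -- involution axioms
  star_star : ∀ {A B : Obj} (f : Hom A B), star (star f) = f
  star_comp : ∀ {A B C : Obj} (g : Hom B C) (f : Hom A B),
    star (comp g f) = comp (star f) (star g)
  star_id : ∀ A : Obj, star (id A) = id A
  -- complex vector space axioms on hom-blocks
  add_assoc' : ∀ {A B : Obj} (f g h : Hom A B), add (add f g) h = add f (add g h)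
  add_comm' : ∀ {A B : Obj} (f g : Hom A B), add f g = add g f
  zero_add' : ∀ {A B : Obj} (f : Hom A B), add (zero A B) f = f
  add_neg' : ∀ {A B : Obj} (f : Hom A B), add f (neg f) = zero A B
  one_smul' : ∀ {A B : Obj} (f : Hom A B), smul 1 f = f
  mul_smul' : ∀ {A B : Obj} (c d : ℂ) (f : Hom A B), smul (c * d) f = smul c (smul d f)
  smul_add' : ∀ {A B : Obj} (c : ℂ) (f g : Hom A B), smul c (add f g) = add (smul c f) (smul c g)
  add_smul' : ∀ {A B : Obj} (c d : ℂ) (f : Hom A B), smul (c + d) f = add (smul c f) (smul d f)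
  -- bilinearity of composition, conjugate-linearity of the involution
  comp_add_left : ∀ {A B C : Obj} (g : Hom B C) (f₁ f₂ : Hom A B),
    comp g (add f₁ f₂) = add (comp g f₁) (comp g f₂)
  comp_add_right : ∀ {A B C : Obj} (g₁ g₂ : Hom B C) (f : Hom A B),
    comp (add g₁ g₂) f = add (comp g₁ f) (comp g₂ f)
  comp_smul_left : ∀ {A B C : Obj} (g : Hom B C) (c : ℂ) (f : Hom A B),
    comp g (smul c f) = smul c (comp g f)
  comp_smul_right : ∀ {A B C : Obj} (c : ℂ) (g : Hom B C) (f : Hom A B),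
    comp (smul c g) f = smul c (comp g f)
  star_add : ∀ {A B : Obj} (f g : Hom A B), star (add f g) = add (star f) (star g)
  star_smul : ∀ {A B : Obj} (c : ℂ) (f : Hom A B),
    star (smul c f) = smul (starRingEnd ℂ c) (star f)
  -- norm axioms
  norm_nonneg' : ∀ {A B : Obj} (f : Hom A B), 0 ≤ norm f
  norm_eq_zero' : ∀ {A B : Obj} (f : Hom A B), norm f = 0 ↔ f = zero A B
  norm_add_le' : ∀ {A B : Obj} (f g : Hom A B), norm (add f g) ≤ norm f + norm g
  norm_smul' : ∀ {A B : Obj} (c : ℂ) (f : Hom A B), norm (smul c f) = ‖c‖ * norm f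
  norm_comp_le : ∀ {A B C : Obj} (g : Hom B C) (f : Hom A B),
    norm (comp g f) ≤ norm g * norm f
  cstar_property : ∀ {A B : Obj} (f : Hom A B), norm (comp (star f) f) = norm f ^ 2
  -- completeness of the hom-blocks
  complete : ∀ {A B : Obj} (u : ℕ → Hom A B),
    (∀ ε : ℝ, 0 < ε → ∃ N, ∀ m n, N ≤ m → N ≤ n → norm (add (u m) (neg (u n))) ≤ ε) →
    ∃ l : Hom A B, ∀ ε : ℝ, 0 < ε → ∃ N, ∀ m, N ≤ m → norm (add (u m) (neg l)) ≤ ε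
  -- positivity: `f* ∘ f` is positive in the C*-algebra `Hom A A`
  positivity : ∀ {A B : Obj} (f : Hom A B), ∃ g : Hom A A, comp (star f) f = comp (star g) g

/-- A *-functor between C*-categories. -/
structure SFun (Q R : CStarCat) where
  obj : Q.Obj → R.Obj
  map : ∀ {A B : Q.Obj}, Q.Hom A B → R.Hom (obj A) (obj B)
  map_comp : ∀ {A B C : Q.Obj} (g : Q.Hom B C) (f : Q.Hom A B),
    map (Q.comp g f) = R.comp (map g) (map f)
  map_id : ∀ A : Q.Obj, map (Q.id A) = R.id (obj A)
  map_star : ∀ {A B : Q.Obj} (f : Q.Hom A B), map (Q.star f) = R.star (map f)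
  map_add : ∀ {A B : Q.Obj} (f g : Q.Hom A B), map (Q.add f g) = R.add (map f) (map g)
  map_smul : ∀ {A B : Q.Obj} (c : ℂ) (f : Q.Hom A B), map (Q.smul c f) = R.smul c (map f)

/-- Composition of *-functors. -/
def SFun.fcomp {Q R E : CStarCat} (G : SFun R E) (F : SFun Q R) : SFun Q E where
  obj A := G.obj (F.obj A)
  map f := G.map (F.map f)
  map_comp g f := by rw [F.map_comp, G.map_comp]
  map_id A := by rw [F.map_id, G.map_id]
  map_star f := by rw [F.map_star, G.map_star]
  map_add f g := by rw [F.map_add, G.map_add]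
  map_smul c f := by rw [F.map_smul, G.map_smul]

/-- The underlying family of a transformation between the *-functors `φ, ψ`. -/
def NT {Q R : CStarCat} (φ ψ : SFun Q R) : Type :=
  ∀ A : Q.Obj, R.Hom (φ.obj A) (ψ.obj A)

/-- Naturality of a transformation. -/
def IsNat {Q R : CStarCat} (φ ψ : SFun Q R) (Θ : NT φ ψ) : Prop :=
  ∀ {A B : Q.Obj} (f : Q.Hom A B), R.comp (ψ.map f) (Θ A) = R.comp (Θ B) (φ.map f)

/-- Boundedness of a transformation. -/
def Bdd {Q R : CStarCat} (φ ψ : SFun Q R) (Θ : NT φ ψ) : Prop :=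
  ∃ M : ℝ, ∀ A : Q.Obj, R.norm (Θ A) ≤ M

/-- The supremum norm of a transformation. -/
noncomputable def supNorm {Q R : CStarCat} (φ ψ : SFun Q R) (Θ : NT φ ψ) : ℝ :=
  sSup (Set.range fun A : Q.Obj => R.norm (Θ A))

/-- Pointwise vertical composition: `(Φ ∘₁ Ψ)_o := Φ_o ∘ Ψ_o`. -/
def vc {Q R : CStarCat} {φ ψ ξ : SFun Q R} (Θ : NT ψ ξ) (Ξ : NT φ ψ) : NT φ ξ :=
  fun A => R.comp (Θ A) (Ξ A)

/-- Godement horizontal composition: `(Ω ∘₀ Θ)_o := ψ₂(Θ_o) ∘ Ω_{φ₁(o)}`. -/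
def hc {Q R E : CStarCat} {φ₁ ψ₁ : SFun Q R} {φ₂ ψ₂ : SFun R E}
    (Ω : NT φ₂ ψ₂) (Θ : NT φ₁ ψ₁) : NT (φ₂.fcomp φ₁) (ψ₂.fcomp ψ₁) :=
  fun A => E.comp (ψ₂.map (Θ A)) (Ω (φ₁.obj A))

/-- Pointwise involution `(Φ^{*₁})_o := (Φ_o)*`. -/
def starN {Q R : CStarCat} {φ ψ : SFun Q R} (Θ : NT φ ψ) : NT ψ φ :=
  fun A => R.star (Θ A)

/-- Pointwise addition. -/
def addN {Q R : CStarCat} {φ ψ : SFun Q R} (Θ Ξ : NT φ ψ) : NT φ ψ :=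
  fun A => R.add (Θ A) (Ξ A)

/-- Pointwise negation. -/
def negN {Q R : CStarCat} {φ ψ : SFun Q R} (Θ : NT φ ψ) : NT φ ψ :=
  fun A => R.neg (Θ A)

/-- Pointwise scalar multiplication. -/
def smulN {Q R : CStarCat} {φ ψ : SFun Q R} (c : ℂ) (Θ : NT φ ψ) : NT φ ψ :=
  fun A => R.smul c (Θ A)

/-!
The hom-blocks of a C*-category are Banach spaces and its endomorphism blocks C*-algebras. A
transformation is bounded exactly when it lies in `ℓ^∞` of the family `Hom(φ o, ψ o)`, with
`supNorm` the `ℓ^∞`-norm; this space is complete, and naturality passes to pointwise limits since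
composition is continuous. Submultiplicativity is pointwise; for horizontal composition one also
needs that *-functors are contractive, which follows from `‖F f‖² = ‖F (f* f)‖` and contractivity
of *-homomorphisms between C*-algebras. The C*-identity for `supNorm` is the pointwise one, as
squaring commutes with suprema of nonnegative reals.

For positivity, `Φ^{*₁} ∘₁ Φ` is natural from `φ` to `φ`, and so is its pointwise square root
`|Φ|`: an intertwiner `u p = q u` between selfadjoint elements also intertwines `f p` and `f q` for
every continuous `f`, as it does for polynomials and these approximate `f` uniformly on the spectra.
-/

theorem cfc_sqrt_mul_self {A : Type*} [Ring A] [StarRing A] [Algebra ℝ A] [TopologicalSpace A]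
    [ContinuousFunctionalCalculus ℝ A IsSelfAdjoint] {a : A} (ha : IsSelfAdjoint a)
    (ha_nonneg : ∀ x ∈ spectrum ℝ a, 0 ≤ x) :
    cfc Real.sqrt a * cfc Real.sqrt a = a := by
  rw [← cfc_mul Real.sqrt Real.sqrt a]
  exact (cfc_congr fun x hx => Real.mul_self_sqrt (ha_nonneg x hx)).trans (cfc_id' ℝ a)

open Filter in
theorem exists_polynomial_seq_tendstoUniformlyOn {a b : ℝ} {f : ℝ → ℝ}
    (hf : ContinuousOn f (Set.Icc a b)) :
    ∃ P : ℕ → Polynomial ℝ,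
      TendstoUniformlyOn (fun n x => (P n).eval x) f atTop (Set.Icc a b) := by
  choose P hP using fun n : ℕ =>
    exists_polynomial_near_of_continuousOn a b f hf (1 / (n + 1)) Nat.one_div_pos_of_nat
  refine ⟨P, Metric.tendstoUniformlyOn_iff.mpr fun ε hε => ?_⟩
  obtain ⟨N, hN⟩ := exists_nat_one_div_lt hε
  filter_upwards [eventually_ge_atTop N] with n hn x hx
  rw [Real.dist_eq, abs_sub_comm]
  refine (hP n x hx).trans_le (hN.le.trans' ?_)
  gcongr

namespace CStarCat

variable {R : CStarCat}

section HomInstances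

variable (X Y : R.Obj)

instance : Zero (R.Hom X Y) := ⟨R.zero X Y⟩
instance : Add (R.Hom X Y) := ⟨R.add⟩
instance : Neg (R.Hom X Y) := ⟨R.neg⟩

instance : AddCommGroup (R.Hom X Y) where
  add_assoc := R.add_assoc'
  add_comm := R.add_comm'
  zero_add := R.zero_add'
  add_zero f := (R.add_comm' _ _).trans (R.zero_add' f)
  neg_add_cancel f := (R.add_comm' _ _).trans (R.add_neg' f)
  nsmul := nsmulRec
  zsmul := zsmulRec

instance : SMul ℂ (R.Hom X Y) := ⟨R.smul⟩

instance : Module ℂ (R.Hom X Y) :=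
  .ofMinimalAxioms R.smul_add' R.add_smul' R.mul_smul' R.one_smul'

instance : Norm (R.Hom X Y) := ⟨R.norm⟩

theorem normedSpaceCore : NormedSpace.Core ℂ (R.Hom X Y) where
  norm_nonneg := R.norm_nonneg'
  norm_smul := R.norm_smul'
  norm_triangle := R.norm_add_le'
  norm_eq_zero_iff := R.norm_eq_zero'

noncomputable instance : NormedAddCommGroup (R.Hom X Y) := .ofCore (normedSpaceCore X Y)

noncomputable instance : NormedSpace ℂ (R.Hom X Y) := .ofCore (normedSpaceCore X Y)

instance : CompleteSpace (R.Hom X Y) := by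
  refine Metric.complete_of_cauchySeq_tendsto fun u hu => ?_
  obtain ⟨l, hl⟩ := R.complete u fun ε hε => by
    obtain ⟨N, hN⟩ := Metric.cauchySeq_iff.mp hu ε hε
    exact ⟨N, fun m n hm hn => by
      have h := (hN m hm n hn).le
      rwa [dist_eq_norm] at h⟩
  refine ⟨l, Metric.tendsto_atTop.mpr fun ε hε => ?_⟩
  obtain ⟨N, hN⟩ := hl (ε / 2) (half_pos hε)
  exact ⟨N, fun m hm => by rw [dist_eq_norm]; exact (hN m hm).trans_lt (half_lt_self hε)⟩

end HomInstances

variable {A B C : R.Obj}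

noncomputable def compL : R.Hom B C →L[ℂ] R.Hom A B →L[ℂ] R.Hom A C :=
  LinearMap.mkContinuous₂
    (LinearMap.mk₂ ℂ R.comp R.comp_add_right R.comp_smul_right R.comp_add_left
      fun c g f => R.comp_smul_left g c f)
    1 fun g f => by rw [one_mul]; exact R.norm_comp_le g f

@[simp] theorem compL_apply (g : R.Hom B C) (f : R.Hom A B) : R.compL g f = R.comp g f := rfl

section EndInstances

variable (X : R.Obj)

instance : Ring (R.Hom X X) where
  mul := R.comp
  one := R.id X
  mul_assoc := R.comp_assoc
  one_mul := R.id_comp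
  mul_one := R.comp_id
  left_distrib := R.comp_add_left
  right_distrib := R.comp_add_right
  zero_mul f := (R.compL.map_zero₂ f :)
  mul_zero g := (R.compL g).map_zero

instance : StarRing (R.Hom X X) where
  star := R.star
  star_involutive := R.star_star
  star_mul := R.star_comp
  star_add := R.star_add

noncomputable instance : NormedRing (R.Hom X X) :=
  { (inferInstance : NormedAddCommGroup (R.Hom X X)), (inferInstance : Ring (R.Hom X X)) with
    dist_eq _ _ := rfl
    norm_mul_le := R.norm_comp_le }

noncomputable instance : NormedAlgebra ℂ (R.Hom X X) :=
  { Algebra.ofModule (A := R.Hom X X) R.comp_smul_right fun c g f => R.comp_smul_left g c f with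
    norm_smul_le c f := (R.norm_smul' c f).le }

instance : StarModule ℂ (R.Hom X X) := ⟨R.star_smul⟩

instance : CStarRing (R.Hom X X) where
  norm_mul_self_le f := (sq ‖f‖ ▸ R.cstar_property f).ge

noncomputable instance : CStarAlgebra (R.Hom X X) where

end EndInstances

theorem norm_star_comp_self (f : R.Hom A B) : ‖R.comp (R.star f) f‖ = ‖f‖ ^ 2 :=
  R.cstar_property f

theorem norm_star (f : R.Hom A B) : ‖R.star f‖ = ‖f‖ := by
  have norm_le_norm_star : ∀ {A B : R.Obj} (f : R.Hom A B), ‖f‖ ≤ ‖R.star f‖ := by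
    intro A B f
    rcases (norm_nonneg f).eq_or_lt with hf | hf
    · exact hf ▸ norm_nonneg _
    · refine le_of_mul_le_mul_right ?_ hf
      calc ‖f‖ * ‖f‖ = ‖R.comp (R.star f) f‖ := by rw [norm_star_comp_self, sq]
        _ ≤ ‖R.star f‖ * ‖f‖ := R.norm_comp_le _ _
  refine le_antisymm ?_ (norm_le_norm_star f)
  simpa only [R.star_star] using norm_le_norm_star (R.star f)

theorem norm_eq_of_star_comp_self_eq {f : R.Hom A B} {g : R.Hom A C}
    (h : R.comp (R.star g) g = R.comp (R.star f) f) : ‖g‖ = ‖f‖ := by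
  refine (pow_left_inj₀ (norm_nonneg g) (norm_nonneg f) two_ne_zero).mp ?_
  rw [← norm_star_comp_self, ← norm_star_comp_self, h]

theorem isSelfAdjoint_star_comp_self (f : R.Hom A B) : IsSelfAdjoint (R.comp (R.star f) f) := by
  change R.star (R.comp (R.star f) f) = R.comp (R.star f) f
  rw [R.star_comp, R.star_star]

theorem spectrum_star_comp_self_nonneg (f : R.Hom A B) :
    ∀ x ∈ spectrum ℝ (R.comp (R.star f) f), 0 ≤ x := by
  obtain ⟨g, hg⟩ := R.positivity f
  rw [hg]
  exact spectrum_star_mul_self_nonneg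

noncomputable def abs (f : R.Hom A B) : R.Hom A A :=
  cfc Real.sqrt (R.comp (R.star f) f)

theorem star_abs_comp_abs (f : R.Hom A B) :
    R.comp (R.star (R.abs f)) (R.abs f) = R.comp (R.star f) f := by
  have h_sa : IsSelfAdjoint (R.abs f) := cfc_predicate Real.sqrt (R.comp (R.star f) f)
  change Star.star (R.abs f) * R.abs f = _
  rw [h_sa.star_eq]
  exact cfc_sqrt_mul_self (R.isSelfAdjoint_star_comp_self f) (R.spectrum_star_comp_self_nonneg f)

theorem norm_abs (f : R.Hom A B) : ‖R.abs f‖ = ‖f‖ :=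
  R.norm_eq_of_star_comp_self_eq (R.star_abs_comp_abs f)

open Polynomial in
theorem comp_aeval_eq_aeval_comp {u : R.Hom A B} {p : R.Hom A A} {q : R.Hom B B}
    (h : R.comp u p = R.comp q u) (P : ℝ[X]) :
    R.comp u (aeval p P) = R.comp (aeval q P) u := by
  have comp_pow : ∀ n : ℕ, R.comp u (p ^ n) = R.comp (q ^ n) u := by
    intro n
    induction n with
    | zero => exact (R.comp_id u).trans (R.id_comp u).symm
    | succ n ih =>
      show R.comp u (R.comp (p ^ n) p) = R.comp (R.comp (q ^ n) q) u
      rw [← R.comp_assoc, ih, R.comp_assoc, h, R.comp_assoc]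
  change R.compL u _ = R.compL.flip u _
  rw [aeval_eq_sum_range, aeval_eq_sum_range, map_sum, map_sum]
  simp only [ContinuousLinearMap.map_smul_of_tower, smul_apply, ContinuousLinearMap.flip_apply,
    compL_apply, comp_pow]

open Filter Topology in
theorem comp_cfc_eq_cfc_comp {u : R.Hom A B} {p : R.Hom A A} {q : R.Hom B B}
    (hp : IsSelfAdjoint p) (hq : IsSelfAdjoint q) (h : R.comp u p = R.comp q u)
    {f : ℝ → ℝ} (hf : Continuous f) :
    R.comp u (cfc f p) = R.comp (cfc f q) u := by
  obtain ⟨r, hr⟩ : ∃ r, spectrum ℝ p ∪ spectrum ℝ q ⊆ Set.Icc (-r) r := by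
    obtain ⟨r, hr⟩ := ((ContinuousFunctionalCalculus.isCompact_spectrum (R := ℝ) p).union
      (ContinuousFunctionalCalculus.isCompact_spectrum (R := ℝ) q)).isBounded.subset_closedBall 0
    exact ⟨r, by simpa [Real.closedBall_eq_Icc] using hr⟩
  obtain ⟨P, hP⟩ := exists_polynomial_seq_tendstoUniformlyOn hf.continuousOn (a := -r) (b := r)
  have cfc_tendsto {X : R.Obj} (a : R.Hom X X) (ha : spectrum ℝ a ⊆ Set.Icc (-r) r) :
      Tendsto (fun n => cfc (P n).eval a) atTop (𝓝 (cfc f a)) :=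
    tendsto_cfc_fun (hP.mono ha) (.of_forall fun n => (P n).continuous.continuousOn)
  have lhs := ((R.compL u).continuous.tendsto _).comp
    (cfc_tendsto p (Set.subset_union_left.trans hr))
  have rhs := ((R.compL.flip u).continuous.tendsto _).comp
    (cfc_tendsto q (Set.subset_union_right.trans hr))
  refine tendsto_nhds_unique lhs (rhs.congr fun n => ?_)
  simp only [Function.comp_apply, ContinuousLinearMap.flip_apply, compL_apply]
  rw [cfc_polynomial _ p hp, cfc_polynomial _ q hq]
  exact (comp_aeval_eq_aeval_comp h _).symm

end CStarCat

namespace SFun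

variable {Q R : CStarCat}

noncomputable def endHom (φ : SFun Q R) (A : Q.Obj) :
    Q.Hom A A →⋆ₙₐ[ℂ] R.Hom (φ.obj A) (φ.obj A) where
  toFun := φ.map
  map_smul' := φ.map_smul
  map_zero' := by
    have h : φ.map (0 + 0 : Q.Hom A A) = φ.map 0 + φ.map 0 := φ.map_add 0 0
    simpa using h
  map_add' := φ.map_add
  map_mul' := φ.map_comp
  map_star' := φ.map_star

theorem norm_map_le (φ : SFun Q R) {A B : Q.Obj} (f : Q.Hom A B) : ‖φ.map f‖ ≤ ‖f‖ := by
  refine (pow_le_pow_iff_left₀ (norm_nonneg _) (norm_nonneg f) two_ne_zero).mp ?_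
  calc ‖φ.map f‖ ^ 2 = ‖φ.endHom A (Q.comp (Q.star f) f)‖ := by
        rw [← CStarCat.norm_star_comp_self, ← φ.map_star, ← φ.map_comp]; rfl
    _ ≤ ‖Q.comp (Q.star f) f‖ := NonUnitalStarAlgHom.norm_apply_le _ _
    _ = ‖f‖ ^ 2 := Q.norm_star_comp_self f

end SFun

section NatTrans

open Filter Topology ENNReal

variable {Q R E : CStarCat}

section

variable {φ ψ ξ : SFun Q R}

theorem IsNat.vc {Θ : NT ψ ξ} {Ξ : NT φ ψ} (hΘ : IsNat ψ ξ Θ) (hΞ : IsNat φ ψ Ξ) :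
    IsNat φ ξ (vc Θ Ξ) := by
  intro A B f
  change R.comp (ξ.map f) (R.comp (Θ A) (Ξ A)) = R.comp (R.comp (Θ B) (Ξ B)) (φ.map f)
  rw [← R.comp_assoc, hΘ f, R.comp_assoc, hΞ f, ← R.comp_assoc]

theorem IsNat.starN {Θ : NT φ ψ} (hΘ : IsNat φ ψ Θ) : IsNat ψ φ (starN Θ) := by
  intro A B f
  have h := congrArg R.star (hΘ (Q.star f))
  rwa [R.star_comp, R.star_comp, ψ.map_star, R.star_star, φ.map_star, R.star_star, eq_comm] at h

theorem IsNat.addN {Θ Ξ : NT φ ψ} (hΘ : IsNat φ ψ Θ) (hΞ : IsNat φ ψ Ξ) :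
    IsNat φ ψ (addN Θ Ξ) := by
  intro A B f
  change R.comp (ψ.map f) (R.add (Θ A) (Ξ A)) = R.comp (R.add (Θ B) (Ξ B)) (φ.map f)
  rw [R.comp_add_left, R.comp_add_right, hΘ f, hΞ f]

theorem IsNat.smulN {Θ : NT φ ψ} (hΘ : IsNat φ ψ Θ) (c : ℂ) : IsNat φ ψ (smulN c Θ) := by
  intro A B f
  change R.comp (ψ.map f) (R.smul c (Θ A)) = R.comp (R.smul c (Θ B)) (φ.map f)
  rw [R.comp_smul_left, R.comp_smul_right, hΘ f]

theorem bdd_iff_memℓp {Θ : NT φ ψ} :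
    Bdd φ ψ Θ ↔ Memℓp (E := fun A => R.Hom (φ.obj A) (ψ.obj A)) Θ ∞ :=
  .symm <| memℓp_infty_iff.trans
    ⟨fun ⟨M, hM⟩ => ⟨M, fun A => hM ⟨A, rfl⟩⟩, fun ⟨M, hM⟩ => ⟨M, Set.forall_mem_range.mpr hM⟩⟩

theorem Bdd.bddAbove {Θ : NT φ ψ} (h : Bdd φ ψ Θ) : BddAbove (Set.range fun A => ‖Θ A‖) :=
  memℓp_infty_iff.mp (bdd_iff_memℓp.mp h)

theorem norm_le_supNorm {Θ : NT φ ψ} (h : Bdd φ ψ Θ) (A : Q.Obj) : ‖Θ A‖ ≤ supNorm φ ψ Θ :=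
  le_csSup h.bddAbove ⟨A, rfl⟩

theorem supNorm_nonneg (Θ : NT φ ψ) : 0 ≤ supNorm φ ψ Θ :=
  Real.sSup_nonneg (Set.forall_mem_range.mpr fun A => norm_nonneg (Θ A))

theorem supNorm_le {Θ : NT φ ψ} {M : ℝ} (hM : 0 ≤ M) (h : ∀ A, ‖Θ A‖ ≤ M) :
    supNorm φ ψ Θ ≤ M :=
  Real.sSup_le (Set.forall_mem_range.mpr h) hM

theorem supNorm_addN_negN {Θ Ξ : NT φ ψ} (hΘ : Memℓp Θ ∞) (hΞ : Memℓp Ξ ∞) :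
    supNorm φ ψ (addN Θ (negN Ξ)) = dist (⟨Θ, hΘ⟩ : lp _ ∞) ⟨Ξ, hΞ⟩ := by
  rw [dist_eq_norm]
  rfl

theorem norm_vc_le {Θ : NT ψ ξ} {Ξ : NT φ ψ} (hΘ : Bdd ψ ξ Θ) (hΞ : Bdd φ ψ Ξ) (A : Q.Obj) :
    ‖vc Θ Ξ A‖ ≤ supNorm ψ ξ Θ * supNorm φ ψ Ξ :=
  (R.norm_comp_le _ _).trans <|
    mul_le_mul (norm_le_supNorm hΘ A) (norm_le_supNorm hΞ A) (norm_nonneg (Ξ A)) (supNorm_nonneg Θ)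

theorem Bdd.vc {Θ : NT ψ ξ} {Ξ : NT φ ψ} (hΘ : Bdd ψ ξ Θ) (hΞ : Bdd φ ψ Ξ) :
    Bdd φ ξ (vc Θ Ξ) :=
  ⟨_, norm_vc_le hΘ hΞ⟩

theorem supNorm_vc_le {Θ : NT ψ ξ} {Ξ : NT φ ψ} (hΘ : Bdd ψ ξ Θ) (hΞ : Bdd φ ψ Ξ) :
    supNorm φ ξ (vc Θ Ξ) ≤ supNorm ψ ξ Θ * supNorm φ ψ Ξ :=
  supNorm_le (mul_nonneg (supNorm_nonneg Θ) (supNorm_nonneg Ξ)) (norm_vc_le hΘ hΞ)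

theorem supNorm_starN (Θ : NT φ ψ) : supNorm ψ φ (starN Θ) = supNorm φ ψ Θ :=
  congrArg sSup <| congrArg Set.range <| funext fun A => R.norm_star (Θ A)

theorem Bdd.starN {Θ : NT φ ψ} (h : Bdd φ ψ Θ) : Bdd ψ φ (starN Θ) :=
  ⟨supNorm φ ψ Θ, fun A => (R.norm_star (Θ A)).trans_le (norm_le_supNorm h A)⟩

-- No boundedness is needed: for an unbounded `Θ` both sides are the junk value `0` of `sSup`.
theorem supNorm_vc_starN_self (Θ : NT φ ψ) :
    supNorm φ φ (vc (starN Θ) Θ) = supNorm φ ψ Θ ^ 2 := by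
  change ⨆ A, ‖R.comp (R.star (Θ A)) (Θ A)‖ = (⨆ A, ‖Θ A‖) ^ 2
  simp only [R.norm_star_comp_self]
  exact (Real.iSup_pow_of_ne_zero (fun A => norm_nonneg _) two_ne_zero).symm

theorem Bdd.addN {Θ Ξ : NT φ ψ} (hΘ : Bdd φ ψ Θ) (hΞ : Bdd φ ψ Ξ) : Bdd φ ψ (addN Θ Ξ) :=
  bdd_iff_memℓp.mpr ((bdd_iff_memℓp.mp hΘ).add (bdd_iff_memℓp.mp hΞ))

theorem Bdd.smulN {Θ : NT φ ψ} (h : Bdd φ ψ Θ) (c : ℂ) : Bdd φ ψ (smulN c Θ) :=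
  bdd_iff_memℓp.mpr ((bdd_iff_memℓp.mp h).const_smul c)

noncomputable def absN (Θ : NT φ ψ) : NT φ φ := fun A => R.abs (Θ A)

theorem vc_starN_absN (Θ : NT φ ψ) : vc (starN (absN Θ)) (absN Θ) = vc (starN Θ) Θ :=
  funext fun A => R.star_abs_comp_abs (Θ A)

theorem IsNat.absN {Θ : NT φ ψ} (hΘ : IsNat φ ψ Θ) : IsNat φ φ (absN Θ) := fun f =>
  R.comp_cfc_eq_cfc_comp (R.isSelfAdjoint_star_comp_self _) (R.isSelfAdjoint_star_comp_self _)
    (IsNat.vc (IsNat.starN hΘ) hΘ f) Real.continuous_sqrt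

theorem Bdd.absN {Θ : NT φ ψ} (h : Bdd φ ψ Θ) : Bdd φ φ (absN Θ) :=
  ⟨supNorm φ ψ Θ, fun A => (R.norm_abs (Θ A)).trans_le (norm_le_supNorm h A)⟩

theorem IsNat.of_tendsto {ι : Type*} {l : Filter ι} [l.NeBot] {u : ι → NT φ ψ} {L : NT φ ψ}
    (hu : ∀ i, IsNat φ ψ (u i)) (hL : ∀ A, Tendsto (fun i => u i A) l (𝓝 (L A))) :
    IsNat φ ψ L := by
  intro A B f
  exact tendsto_nhds_unique (((R.compL (ψ.map f)).continuous.tendsto _).comp (hL A))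
    ((((R.compL.flip (φ.map f)).continuous.tendsto _).comp (hL B)).congr fun i => (hu i f).symm)

theorem exists_isNat_bdd_tendsto_of_cauchy {u : ℕ → NT φ ψ}
    (hu : ∀ k, IsNat φ ψ (u k) ∧ Bdd φ ψ (u k))
    (hC : ∀ ε : ℝ, 0 < ε → ∃ N, ∀ m k, N ≤ m → N ≤ k →
      supNorm φ ψ (addN (u m) (negN (u k))) ≤ ε) :
    ∃ L : NT φ ψ, IsNat φ ψ L ∧ Bdd φ ψ L ∧
      ∀ ε : ℝ, 0 < ε → ∃ N, ∀ m, N ≤ m → supNorm φ ψ (addN (u m) (negN L)) ≤ ε := by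
  let v : ℕ → lp (fun A => R.Hom (φ.obj A) (ψ.obj A)) ∞ :=
    fun k => ⟨u k, bdd_iff_memℓp.mp (hu k).2⟩
  have hv : CauchySeq v := Metric.cauchySeq_iff.mpr fun ε hε => by
    obtain ⟨N, hN⟩ := hC (ε / 2) (half_pos hε)
    exact ⟨N, fun m hm k hk =>
      ((supNorm_addN_negN _ _).symm.trans_le (hN m k hm hk)).trans_lt (half_lt_self hε)⟩
  obtain ⟨ℓ, hℓ⟩ := cauchySeq_tendsto_of_complete hv
  refine ⟨(ℓ : ∀ A, R.Hom (φ.obj A) (ψ.obj A)), IsNat.of_tendsto (fun k => (hu k).1) fun A =>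
      ((lp.evalCLM ℂ _ ∞ A).continuous.tendsto ℓ).comp hℓ, bdd_iff_memℓp.mpr ℓ.2,
    fun ε hε => ?_⟩
  obtain ⟨N, hN⟩ := Metric.tendsto_atTop.mp hℓ ε hε
  exact ⟨N, fun m hm => (supNorm_addN_negN _ ℓ.2).trans_le (hN m hm).le⟩

end

section

variable {φ₁ ψ₁ : SFun Q R} {φ₂ ψ₂ : SFun R E} {Θ : NT φ₁ ψ₁} {Ω : NT φ₂ ψ₂}

theorem IsNat.hc (hΘ : IsNat φ₁ ψ₁ Θ) (hΩ : IsNat φ₂ ψ₂ Ω) :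
    IsNat (φ₂.fcomp φ₁) (ψ₂.fcomp ψ₁) (hc Ω Θ) := by
  intro A B f
  change E.comp (ψ₂.map (ψ₁.map f)) (E.comp (ψ₂.map (Θ A)) (Ω (φ₁.obj A)))
    = E.comp (E.comp (ψ₂.map (Θ B)) (Ω (φ₁.obj B))) (φ₂.map (φ₁.map f))
  rw [← E.comp_assoc, ← ψ₂.map_comp, hΘ f, ψ₂.map_comp, E.comp_assoc, hΩ (φ₁.map f),
    ← E.comp_assoc]

theorem norm_hc_le (hΘ : Bdd φ₁ ψ₁ Θ) (hΩ : Bdd φ₂ ψ₂ Ω) (A : Q.Obj) :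
    ‖hc Ω Θ A‖ ≤ supNorm φ₂ ψ₂ Ω * supNorm φ₁ ψ₁ Θ :=
  (E.norm_comp_le _ _).trans <| (mul_comm _ _).trans_le <|
    mul_le_mul (norm_le_supNorm hΩ _) ((ψ₂.norm_map_le _).trans (norm_le_supNorm hΘ A))
      (norm_nonneg (ψ₂.map (Θ A))) (supNorm_nonneg Ω)

theorem Bdd.hc (hΘ : Bdd φ₁ ψ₁ Θ) (hΩ : Bdd φ₂ ψ₂ Ω) :
    Bdd (φ₂.fcomp φ₁) (ψ₂.fcomp ψ₁) (hc Ω Θ) :=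
  ⟨_, norm_hc_le hΘ hΩ⟩

theorem supNorm_hc_le (hΘ : Bdd φ₁ ψ₁ Θ) (hΩ : Bdd φ₂ ψ₂ Ω) :
    supNorm (φ₂.fcomp φ₁) (ψ₂.fcomp ψ₁) (hc Ω Θ) ≤ supNorm φ₂ ψ₂ Ω * supNorm φ₁ ψ₁ Θ :=
  supNorm_le (mul_nonneg (supNorm_nonneg Ω) (supNorm_nonneg Θ)) (norm_hc_le hΘ hΩ)

end

end NatTrans

/-- **Bounded natural transformations of *-functors between small
C*-categories form a Longo-Roberts 2-C*-category**: vertical and horizontal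
compositions and the pointwise involution preserve bounded natural
transformations, the supremum norm is submultiplicative for both compositions,
the C*-property `‖Φ^{*₁} ∘₁ Φ‖ = ‖Φ‖²` holds, `Φ^{*₁} ∘₁ Φ` is positive, each
block of bounded natural transformations between a fixed pair of *-functors is
a complex vector space, and it is complete (a Banach space). -/
theorem bounded_natural_transformations_LR_two_cstar (Q R E : CStarCat) :
    -- vertical composition
    (∀ (φ ψ ξ : SFun Q R) (Θ : NT ψ ξ) (Ξ : NT φ ψ),
      IsNat ψ ξ Θ → IsNat φ ψ Ξ → Bdd ψ ξ Θ → Bdd φ ψ Ξ →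
        IsNat φ ξ (vc Θ Ξ) ∧ Bdd φ ξ (vc Θ Ξ) ∧
        supNorm φ ξ (vc Θ Ξ) ≤ supNorm ψ ξ Θ * supNorm φ ψ Ξ) ∧
    -- horizontal composition
    (∀ (φ₁ ψ₁ : SFun Q R) (φ₂ ψ₂ : SFun R E) (Θ : NT φ₁ ψ₁) (Ω : NT φ₂ ψ₂),
      IsNat φ₁ ψ₁ Θ → IsNat φ₂ ψ₂ Ω → Bdd φ₁ ψ₁ Θ → Bdd φ₂ ψ₂ Ω →
        IsNat (φ₂.fcomp φ₁) (ψ₂.fcomp ψ₁) (hc Ω Θ) ∧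
        Bdd (φ₂.fcomp φ₁) (ψ₂.fcomp ψ₁) (hc Ω Θ) ∧
        supNorm (φ₂.fcomp φ₁) (ψ₂.fcomp ψ₁) (hc Ω Θ) ≤
          supNorm φ₂ ψ₂ Ω * supNorm φ₁ ψ₁ Θ) ∧
    -- involution and C*-property
    (∀ (φ ψ : SFun Q R) (Θ : NT φ ψ), IsNat φ ψ Θ → Bdd φ ψ Θ →
      IsNat ψ φ (starN Θ) ∧ Bdd ψ φ (starN Θ) ∧
      supNorm ψ φ (starN Θ) = supNorm φ ψ Θ ∧
      supNorm φ φ (vc (starN Θ) Θ) = supNorm φ ψ Θ ^ 2) ∧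
    -- linear structure of the blocks
    (∀ (φ ψ : SFun Q R) (Θ Ξ : NT φ ψ) (c : ℂ),
      IsNat φ ψ Θ → IsNat φ ψ Ξ → Bdd φ ψ Θ → Bdd φ ψ Ξ →
        IsNat φ ψ (addN Θ Ξ) ∧ Bdd φ ψ (addN Θ Ξ) ∧
        IsNat φ ψ (smulN c Θ) ∧ Bdd φ ψ (smulN c Θ)) ∧
    -- completeness of the blocks (Banach spaces)
    (∀ (φ ψ : SFun Q R) (u : ℕ → NT φ ψ),
      (∀ k, IsNat φ ψ (u k) ∧ Bdd φ ψ (u k)) →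
      (∀ ε : ℝ, 0 < ε → ∃ N, ∀ m k, N ≤ m → N ≤ k →
        supNorm φ ψ (addN (u m) (negN (u k))) ≤ ε) →
      ∃ L : NT φ ψ, IsNat φ ψ L ∧ Bdd φ ψ L ∧
        ∀ ε : ℝ, 0 < ε → ∃ N, ∀ m, N ≤ m → supNorm φ ψ (addN (u m) (negN L)) ≤ ε) ∧
    -- positivity of `Φ^{*₁} ∘₁ Φ`
    (∀ (φ ψ : SFun Q R) (Θ : NT φ ψ), IsNat φ ψ Θ → Bdd φ ψ Θ →
      ∃ Ξ : NT φ φ, IsNat φ φ Ξ ∧ Bdd φ φ Ξ ∧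
        vc (starN Θ) Θ = vc (starN Ξ) Ξ) :=
  ⟨fun _ _ _ _ _ hΘ hΞ bΘ bΞ => ⟨IsNat.vc hΘ hΞ, bΘ.vc bΞ, supNorm_vc_le bΘ bΞ⟩,
    fun _ _ _ _ _ _ hΘ hΩ bΘ bΩ => ⟨IsNat.hc hΘ hΩ, bΘ.hc bΩ, supNorm_hc_le bΘ bΩ⟩,
    fun _ _ Θ hΘ bΘ => ⟨IsNat.starN hΘ, bΘ.starN, supNorm_starN Θ, supNorm_vc_starN_self Θ⟩,
    fun _ _ _ _ c hΘ hΞ bΘ bΞ => ⟨IsNat.addN hΘ hΞ, bΘ.addN bΞ, IsNat.smulN hΘ c, bΘ.smulN c⟩,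
    fun _ _ _ hu hC => exists_isNat_bdd_tendsto_of_cauchy hu hC,
    fun _ _ Θ hΘ bΘ => ⟨absN Θ, IsNat.absN hΘ, bΘ.absN, (vc_starN_absN Θ).symm⟩⟩
end

section
/- The space of complex hypermatrices M_{N₁²…Nₙ²}(ℂ) ≅ M_{N₁}(ℂ) ⊗ ⋯ ⊗ M_{Nₙ}(ℂ), equipped for each subset γ ⊆ {1,…,n} with the product •_γ acting as matrix (convolution) product in levels belonging to γ and as Schur (entrywise) product in the remaining levels, the involution ⋆_γ acting as conjugate-transpose in levels of γ and entrywise conjugation elsewhere, and the norm ‖·‖_γ given by the tensor product of operator norms in levels of γ and max-norms elsewhere, is a C*-algebra for each γ; hence it is a hyper-C*-algebra with 2ⁿ C*-structures on the same complete topological vector space. -/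
/-- The space of hypermatrices of depth `n` with levels of sizes `N 0,…,N (n-1)`. -/
abbrev HM {n : ℕ} (N : Fin n → ℕ) : Type :=
  (∀ i, Fin (N i)) → (∀ i, Fin (N i)) → ℂ

/-- The product `•_γ`: contraction (matrix product) at the levels in `γ`,
Schur (entrywise) product at the remaining levels. -/
noncomputable def hmul {n : ℕ} (N : Fin n → ℕ) (γ : Finset (Fin n)) (x y : HM N) : HM N := fun u l =>
  ∑ o : ∀ k : { i // i ∈ γ }, Fin (N k.1),
    x u (fun i => if h : i ∈ γ then o ⟨i, h⟩ else l i) *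
    y (fun i => if h : i ∈ γ then o ⟨i, h⟩ else u i) l

/-- The involution `⋆_γ`: conjugate-transpose at the levels in `γ`, entrywise
conjugation at the remaining levels. -/
def hstar {n : ℕ} (N : Fin n → ℕ) (γ : Finset (Fin n)) (x : HM N) : HM N := fun u l =>
  starRingEnd ℂ (x (fun i => if i ∈ γ then l i else u i) (fun i => if i ∈ γ then u i else l i))

/-- The `γ`-hslice of a hypermatrix: the matrix indexed by the `γ`-levels
obtained by freezing the remaining upper indices at `u` and lower indices at
`l`. -/
def hslice {n : ℕ} (N : Fin n → ℕ) (γ : Finset (Fin n)) (x : HM N) (u l : ∀ i, Fin (N i)) :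
    Matrix (∀ k : { i // i ∈ γ }, Fin (N k.1)) (∀ k : { i // i ∈ γ }, Fin (N k.1)) ℂ :=
  fun a b => x (fun i => if h : i ∈ γ then a ⟨i, h⟩ else u i)
    (fun i => if h : i ∈ γ then b ⟨i, h⟩ else l i)

/-- The norm `‖·‖_γ`: the maximum (over the frozen non-`γ` indices) of the
operator norms of the `γ`-slices; i.e. the tensor product of the operator
norms at the levels in `γ` with the max norms at the remaining levels. -/
noncomputable def hnorm {n : ℕ} (N : Fin n → ℕ) (γ : Finset (Fin n)) (x : HM N) : ℝ :=
  sSup (Set.range fun p : (∀ i, Fin (N i)) × (∀ i, Fin (N i)) =>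
    ‖Matrix.toEuclideanCLM (𝕜 := ℂ) (hslice N γ x p.1 p.2)‖)

/-! Freezing the indices outside `γ` cuts a hypermatrix into a finite family of square matrices
indexed by the `γ`-levels, its `γ`-slices. This is an injective linear map which turns `•_γ` into
the slicewise matrix product, `⋆_γ` into the slicewise conjugate transpose and `‖·‖_γ` into the
sup norm of the `L²` operator norms of the slices. It thus identifies the `γ`-structure with a
`*`-subalgebra of a finite product of C*-algebras `Mₖ(ℂ)`, from which every axiom is inherited.
As the space is finite-dimensional, each `‖·‖_γ` is equivalent to the entrywise sup norm. -/

open scoped Matrix.Norms.L2Operator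

namespace Hypermatrix

variable {n : ℕ} {N : Fin n → ℕ} {γ : Finset (Fin n)}

abbrev SliceIndex (N : Fin n → ℕ) (γ : Finset (Fin n)) : Type :=
  ∀ k : { i // i ∈ γ }, Fin (N k.1)

def hslices (N : Fin n → ℕ) (γ : Finset (Fin n)) :
    HM N →ₗ[ℂ] ((∀ i, Fin (N i)) × (∀ i, Fin (N i)) →
      Matrix (SliceIndex N γ) (SliceIndex N γ) ℂ) where
  toFun x p := hslice N γ x p.1 p.2
  map_add' _ _ := rfl
  map_smul' _ _ := rfl

lemma hslices_apply (x : HM N) (p : (∀ i, Fin (N i)) × (∀ i, Fin (N i))) :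
    hslices N γ x p = hslice N γ x p.1 p.2 := rfl

lemma hslices_injective (N : Fin n → ℕ) (γ : Finset (Fin n)) :
    Function.Injective (hslices N γ) := by
  intro x y h
  funext u l
  simpa [hslices_apply, hslice] using congr_fun₃ h (u, l) (fun k => u k.1) (fun k => l k.1)

lemma hslices_hmul (x y : HM N) :
    hslices N γ (hmul N γ x y) = hslices N γ x * hslices N γ y := by
  funext p a b
  simp only [hslices_apply, Pi.mul_apply, hslice, hmul, Matrix.mul_apply]
  refine Finset.sum_congr rfl fun o _ => ?_
  congr 3 <;> funext i <;> by_cases h : i ∈ γ <;> simp [h]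

lemma hslices_hstar (x : HM N) : hslices N γ (hstar N γ x) = star (hslices N γ x) := by
  funext p a b
  simp only [hslices_apply, Pi.star_apply, Matrix.star_apply, hslice, hstar, starRingEnd_apply]
  congr 2 <;> funext i <;> by_cases h : i ∈ γ <;> simp [h]

def hunit (N : Fin n → ℕ) (γ : Finset (Fin n)) : HM N := fun u l =>
  if ∀ i ∈ γ, u i = l i then 1 else 0

lemma hslices_hunit : hslices N γ (hunit N γ) = 1 := by
  funext p a b
  simp only [hslices_apply, Pi.one_apply, Matrix.one_apply, hslice, hunit]
  congr 1
  refine propext ⟨fun h => funext fun k => by simpa [k.2] using h k.1 k.2, ?_⟩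
  rintro rfl i hi
  simp [hi]

lemma hnorm_eq_norm_hslices (x : HM N) : hnorm N γ x = ‖hslices N γ x‖ := by
  refine le_antisymm (Real.sSup_le ?_ (norm_nonneg _)) ?_
  · rintro _ ⟨p, rfl⟩
    exact norm_le_pi_norm (hslices N γ x) p
  · refine (pi_norm_le_iff_of_nonneg (Real.sSup_nonneg ?_)).2 fun p =>
      le_csSup (Set.finite_range _).bddAbove ⟨p, rfl⟩
    rintro _ ⟨p, rfl⟩
    exact norm_nonneg _

lemma hmul_assoc (x y z : HM N) : hmul N γ (hmul N γ x y) z = hmul N γ x (hmul N γ y z) :=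
  hslices_injective N γ <| by simp only [hslices_hmul, mul_assoc]

lemma hunit_hmul (x : HM N) : hmul N γ (hunit N γ) x = x :=
  hslices_injective N γ <| by rw [hslices_hmul, hslices_hunit, one_mul]

lemma hmul_hunit (x : HM N) : hmul N γ x (hunit N γ) = x :=
  hslices_injective N γ <| by rw [hslices_hmul, hslices_hunit, mul_one]

lemma hmul_add (x y z : HM N) : hmul N γ x (y + z) = hmul N γ x y + hmul N γ x z :=
  hslices_injective N γ <| by simp only [hslices_hmul, map_add, mul_add]

lemma add_hmul (x y z : HM N) : hmul N γ (x + y) z = hmul N γ x z + hmul N γ y z :=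
  hslices_injective N γ <| by simp only [hslices_hmul, map_add, add_mul]

lemma smul_hmul (c : ℂ) (x y : HM N) : hmul N γ (c • x) y = c • hmul N γ x y :=
  hslices_injective N γ <| by simp only [hslices_hmul, map_smul, smul_mul_assoc]

lemma hmul_smul (c : ℂ) (x y : HM N) : hmul N γ x (c • y) = c • hmul N γ x y :=
  hslices_injective N γ <| by simp only [hslices_hmul, map_smul, mul_smul_comm]

lemma hstar_hstar (x : HM N) : hstar N γ (hstar N γ x) = x :=
  hslices_injective N γ <| by rw [hslices_hstar, hslices_hstar, star_star]

lemma hstar_hmul (x y : HM N) :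
    hstar N γ (hmul N γ x y) = hmul N γ (hstar N γ y) (hstar N γ x) :=
  hslices_injective N γ <| by simp only [hslices_hstar, hslices_hmul, star_mul]

lemma hstar_smul_add (c : ℂ) (x y : HM N) :
    hstar N γ (c • x + y) = (starRingEnd ℂ c) • hstar N γ x + hstar N γ y :=
  hslices_injective N γ <| by
    simp only [hslices_hstar, map_add, map_smul, star_add, star_smul, starRingEnd_apply]

lemma hnorm_nonneg (x : HM N) : 0 ≤ hnorm N γ x :=
  (hnorm_eq_norm_hslices x).symm ▸ norm_nonneg _

lemma hnorm_eq_zero {x : HM N} : hnorm N γ x = 0 ↔ x = 0 := by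
  rw [hnorm_eq_norm_hslices, norm_eq_zero, ← map_zero (hslices N γ), (hslices_injective N γ).eq_iff]

lemma hnorm_add_le (x y : HM N) : hnorm N γ (x + y) ≤ hnorm N γ x + hnorm N γ y := by
  simp only [hnorm_eq_norm_hslices, map_add]
  exact norm_add_le _ _

lemma hnorm_smul (c : ℂ) (x : HM N) : hnorm N γ (c • x) = ‖c‖ * hnorm N γ x := by
  simp only [hnorm_eq_norm_hslices, map_smul]
  exact norm_smul c _

lemma hnorm_hmul_le (x y : HM N) : hnorm N γ (hmul N γ x y) ≤ hnorm N γ x * hnorm N γ y := by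
  simp only [hnorm_eq_norm_hslices, hslices_hmul]
  exact norm_mul_le _ _

lemma hnorm_hstar_hmul_self (x : HM N) :
    hnorm N γ (hmul N γ (hstar N γ x) x) = hnorm N γ x ^ 2 := by
  simp only [hnorm_eq_norm_hslices, hslices_hmul, hslices_hstar, sq]
  exact CStarRing.norm_star_mul_self

lemma exists_hnorm_le_mul_norm (γ : Finset (Fin n)) :
    ∃ C > 0, ∀ x : HM N, hnorm N γ x ≤ C * ‖x‖ := by
  obtain ⟨C, hC, h⟩ := (LinearMap.toContinuousLinearMap (hslices N γ)).bound
  exact ⟨C, hC, fun x => (hnorm_eq_norm_hslices x).trans_le (h x)⟩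

lemma exists_norm_le_mul_hnorm (γ : Finset (Fin n)) :
    ∃ K > 0, ∀ x : HM N, ‖x‖ ≤ K * hnorm N γ x := by
  obtain ⟨K, hK, h⟩ :=
    (hslices N γ).exists_antilipschitzWith (LinearMap.ker_eq_bot.2 (hslices_injective N γ))
  refine ⟨K, hK, fun x => ?_⟩
  simpa [hnorm_eq_norm_hslices] using h.le_mul_norm_sub 0 x

lemma exists_hnorm_le_mul_hnorm (γ γ' : Finset (Fin n)) :
    ∃ C > 0, ∀ x : HM N, hnorm N γ x ≤ C * hnorm N γ' x := by
  obtain ⟨C, hC, hγ⟩ := exists_hnorm_le_mul_norm (N := N) γ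
  obtain ⟨K, hK, hγ'⟩ := exists_norm_le_mul_hnorm (N := N) γ'
  refine ⟨C * K, mul_pos hC hK, fun x => ?_⟩
  calc hnorm N γ x ≤ C * ‖x‖ := hγ x
    _ ≤ C * (K * hnorm N γ' x) := by gcongr; exact hγ' x
    _ = C * K * hnorm N γ' x := (mul_assoc _ _ _).symm

end Hypermatrix

/-- **Hypermatrices form a hyper-C*-algebra.**  For every subset
`γ ⊆ {1,…,n}`, the space of complex hypermatrices with the product `•_γ`, the
involution `⋆_γ` and the norm `‖·‖_γ` is a (unital) C*-algebra, and all the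
`2ⁿ` norms are equivalent (compatible with the unique linear topology of the
complete topological vector space of hypermatrices). -/
theorem hypermatrices_hyper_cstar_algebra {n : ℕ} (N : Fin n → ℕ) :
    ∀ γ : Finset (Fin n),
      -- associative unital ℂ-algebra structure:
      (∀ x y z : HM N, hmul N γ (hmul N γ x y) z = hmul N γ x (hmul N γ y z)) ∧
      (∃ e : HM N, ∀ x : HM N, hmul N γ e x = x ∧ hmul N γ x e = x) ∧
      (∀ x y z : HM N, hmul N γ x (y + z) = hmul N γ x y + hmul N γ x z) ∧
      (∀ x y z : HM N, hmul N γ (x + y) z = hmul N γ x z + hmul N γ y z) ∧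
      (∀ (c : ℂ) (x y : HM N), hmul N γ (c • x) y = c • hmul N γ x y) ∧
      (∀ (c : ℂ) (x y : HM N), hmul N γ x (c • y) = c • hmul N γ x y) ∧
      -- involution:
      (∀ x : HM N, hstar N γ (hstar N γ x) = x) ∧
      (∀ x y : HM N, hstar N γ (hmul N γ x y) = hmul N γ (hstar N γ y) (hstar N γ x)) ∧
      (∀ (c : ℂ) (x y : HM N),
        hstar N γ (c • x + y) = (starRingEnd ℂ c) • hstar N γ x + hstar N γ y) ∧
      -- C*-norm:
      (∀ x : HM N, 0 ≤ hnorm N γ x) ∧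
      (∀ x : HM N, hnorm N γ x = 0 ↔ x = 0) ∧
      (∀ x y : HM N, hnorm N γ (x + y) ≤ hnorm N γ x + hnorm N γ y) ∧
      (∀ (c : ℂ) (x : HM N), hnorm N γ (c • x) = ‖c‖ * hnorm N γ x) ∧
      (∀ x y : HM N, hnorm N γ (hmul N γ x y) ≤ hnorm N γ x * hnorm N γ y) ∧
      (∀ x : HM N, hnorm N γ (hmul N γ (hstar N γ x) x) = hnorm N γ x ^ 2) ∧
      -- all the norms are equivalent:
      (∀ γ' : Finset (Fin n), ∃ C : ℝ, 0 < C ∧ ∀ x : HM N,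
        hnorm N γ x ≤ C * hnorm N γ' x) := by
  intro γ
  open Hypermatrix in
  exact ⟨hmul_assoc, ⟨hunit N γ, fun x => ⟨hunit_hmul x, hmul_hunit x⟩⟩, hmul_add, add_hmul,
    smul_hmul, hmul_smul, hstar_hstar, hstar_hmul, hstar_smul_add, hnorm_nonneg,
    fun _ => hnorm_eq_zero, hnorm_add_le, hnorm_smul, hnorm_hmul_le, hnorm_hstar_hmul_self,
    exists_hnorm_le_mul_hnorm γ⟩
end

section
/- Let (X, ∘₀, …, ∘ₙ₋₁, *_α) be a strict globular n-category equipped with a single α-involution for α = {0,…,n−1} (contravariant with respect to all compositions), and let (A, ·, *_A) be a complex unital associative *-algebra. Then the map (σ^{*̂})_z := (σ_{z^{*_α}})^{*_A} defines an involution on each of the n unital convolution algebras (Γ(X;A), ∘̂ₚ): it is antimultiplicative for each ∘̂ₚ, conjugate-linear, and squares to the identity. -/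
/-- The involution `(σ^{*̂}) z := (σ (z^{*α}))^{*A}` on `Γ(X;A)`. -/
def starConv {X : Type*} {A : Type*} [Ring A] [StarRing A]
    (inv : X → X) (σ : X → A) : X → A := fun z => star (σ (inv z))

/-- **Involutions on convolution algebras.**  Let `X` be a finite strict
globular n-category equipped with a single `α`-involution for
`α = {0,…,n−1}` (contravariant with respect to all compositions), and `A` a
complex unital associative *-algebra.  Then `σ ↦ (z ↦ (σ (z^{*α}))^{*A})` is an
involution on each of the `n` unital convolution algebras `(Γ(X;A), ∘̂ₚ)`:
it is antimultiplicative for each `∘̂ₚ`, conjugate-linear, and squares to the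
identity. -/
theorem convolution_involution {n : ℕ} {X : Type*} [Fintype X] [DecidableEq X]
    {A : Type*} [Ring A] [Algebra ℂ A] [StarRing A] [StarModule ℂ A]
    (comp : Fin n → X → X → Option X) (inv : X → X) (h : NCat comp)
    (hinv₁ : ∀ x, inv (inv x) = x)
    (hinv₂ : ∀ (p : Fin n) (x y z : X), comp p x y = some z →
      comp p (inv y) (inv x) = some (inv z))
    (hinv₃ : ∀ (p : Fin n) (e : X), IsId (comp p) e → IsId (comp p) (inv e)) :
    ∀ p : Fin n,
      (∀ σ ρ : X → A, starConv inv (convMul comp p σ ρ) =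
        convMul comp p (starConv inv ρ) (starConv inv σ)) ∧
      (∀ σ : X → A, starConv inv (starConv inv σ) = σ) ∧
      (∀ (c : ℂ) (σ ρ : X → A),
        starConv inv (c • σ + ρ) = (starRingEnd ℂ c) • starConv inv σ + starConv inv ρ) := by
  intro p
  refine ⟨?_, ?_, ?_⟩
  · intro σ ρ
    funext z
    simp only [starConv, convMul, star_sum]
    refine Fintype.sum_bijective (fun w : X × X => (inv w.2, inv w.1))
      (Function.Involutive.bijective (fun w => by simp [hinv₁])) _ _ ?_
    intro w
    by_cases hc : comp p w.1 w.2 = some (inv z)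
    · have hc' : comp p (inv w.2) (inv w.1) = some z := by
        have := hinv₂ p _ _ _ hc; rwa [hinv₁] at this
      simp [hc, hc', hinv₁]
    · have hc' : comp p (inv w.2) (inv w.1) ≠ some z := by
        intro hx
        have := hinv₂ p _ _ _ hx
        rw [hinv₁, hinv₁] at this
        exact hc this
      simp [hc, hc']
  · intro σ
    funext z
    simp [starConv, hinv₁]
  · intro c σ ρ
    funext z
    simp only [starConv, Pi.add_apply, Pi.smul_apply, star_add, star_smul, starRingEnd_apply]
end
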